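/- Suppose each preference graph G_i is a directed path on V_i, and for v ∈ V let w(v, i) = ℓ_i(v), the number of predecessors of v on the path G_i if v ∈ V_i, and w(v, i) = |V_i| if v ∉ V_i. Then the minimum over all allocations π of the maximum dissatisfaction max_{i∈K} δ_π(i) equals the minimum over all partial injective maps σ from K to V of max_{i∈K} c_σ(i), where c_σ(i) = w(σ(i), i) if σ(i) is defined and c_σ(i) = |V_i| otherwise. -/

import Mathlib

/-- Item `u` dominates item `v`: `u = v` or there is a directed path from `u` to `v`
along the arcs in `A`. -/
def Dominates {α : Type*} (A : Set (α × α)) (u v : α) : Prop :=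
  Relation.ReflTransGen (fun a b => (a, b) ∈ A) u v

/-- The dissatisfaction of an agent with approved item set `Vi`, arc set `A`,
receiving the set of items `P`. -/
noncomputable def dissat {α : Type*} (Vi : Set α) (A : Set (α × α)) (P : Set α) : ℕ :=
  Set.ncard {v | v ∈ Vi ∧ ¬ ∃ u, u ∈ P ∧ u ∈ Vi ∧ Dominates A u v}

/-- The satisfaction of an agent with approved item set `Vi`, arc set `A`,
receiving the set of items `P`. -/
noncomputable def satis {α : Type*} (Vi : Set α) (A : Set (α × α)) (P : Set α) : ℕ :=
  Set.ncard {v | v ∈ Vi ∧ ∃ u, u ∈ P ∧ u ∈ Vi ∧ Dominates A u v}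

/-- An allocation assigns pairwise disjoint sets of items to the agents. -/
def IsAllocation {ι α : Type*} (π : ι → Set α) : Prop :=
  Pairwise fun i j => Disjoint (π i) (π j)

/-- The arc set is acyclic (directed acyclic graph). -/
def Acyclic {α : Type*} (A : Set (α × α)) : Prop :=
  ∀ v : α, ¬ Relation.TransGen (fun a b => (a, b) ∈ A) v v

/-- The set of predecessors of `v`: vertices with a directed path of positive length to `v`. -/
def Pred {α : Type*} (A : Set (α × α)) (v : α) : Set α :=
  {u | Relation.TransGen (fun a b => (a, b) ∈ A) u v}

/-- `(Vi, A)` is a directed path: the vertices can be ordered `f 0, …, f (m-1)` so that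
the arcs are exactly the pairs of consecutive vertices. -/
def IsDirPath {α : Type*} (Vi : Set α) (A : Set (α × α)) : Prop :=
  ∃ (m : ℕ) (f : ℕ → α), Set.InjOn f (Set.Iio m) ∧ Vi = f '' Set.Iio m ∧
    A = {p | ∃ k, k + 1 < m ∧ p = (f k, f (k + 1))}

-- The assignment weight of item `v` for an agent with a path preference graph:
-- the number of predecessors of `v` on the path if `v` is on the path, `|V_i|` otherwise.
open scoped Classical in
noncomputable def pathW {α : Type*} (Vi : Set α) (A : Set (α × α)) (v : α) : ℕ :=
  if v ∈ Vi then (Pred A v).ncard else Vi.ncard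

section PathLemmas

variable {α : Type*} {m : ℕ} {f : ℕ → α} {A : Set (α × α)}

lemma pathW_pos {Vi : Set α} {v : α} (h : v ∈ Vi) :
    pathW Vi A v = (Pred A v).ncard := by simp [pathW, h]

lemma pathW_neg {Vi : Set α} {v : α} (h : v ∉ Vi) :
    pathW Vi A v = Vi.ncard := by simp [pathW, h]

lemma tg_struct (hinj : Set.InjOn f (Set.Iio m))
    (hA : A = {p | ∃ k, k + 1 < m ∧ p = (f k, f (k + 1))}) {u v : α}
    (h : Relation.TransGen (fun a b => (a, b) ∈ A) u v) :
    ∃ j l, j < l ∧ l < m ∧ u = f j ∧ v = f l := by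
  induction h with
  | single hb =>
    obtain ⟨k, hk, he⟩ := hA ▸ hb
    exact ⟨k, k + 1, Nat.lt_succ_self k, hk,
      congrArg Prod.fst he, congrArg Prod.snd he⟩
  | tail _ hbv ih =>
    obtain ⟨j, l, hjl, hl, hu, hb⟩ := ih
    obtain ⟨k, hk, he⟩ := hA ▸ hbv
    have hb2 : f l = f k := hb ▸ congrArg Prod.fst he
    have hlk : l = k :=
      hinj (Set.mem_Iio.mpr hl) (Set.mem_Iio.mpr (by omega)) hb2
    exact ⟨j, k + 1, by omega, hk, hu, congrArg Prod.snd he⟩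

lemma tg_chain (hA : A = {p | ∃ k, k + 1 < m ∧ p = (f k, f (k + 1))}) :
    ∀ {j k : ℕ}, j < k → k < m →
      Relation.TransGen (fun a b => (a, b) ∈ A) (f j) (f k) := by
  intro j k
  induction k with
  | zero => omega
  | succ k ih =>
    intro hjk hk
    have harc : (f k, f (k + 1)) ∈ A := hA ▸ ⟨k, hk, rfl⟩
    rcases Nat.lt_succ_iff_lt_or_eq.mp hjk with h | h
    · exact (ih h (by omega)).tail harc
    · subst h; exact .single harc

lemma dom_of_le (hA : A = {p | ∃ k, k + 1 < m ∧ p = (f k, f (k + 1))})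
    {j l : ℕ} (hjl : j ≤ l) (hl : l < m) : Dominates A (f j) (f l) := by
  rcases eq_or_lt_of_le hjl with h | h
  · subst h; exact Relation.ReflTransGen.refl
  · exact (tg_chain hA h hl).to_reflTransGen

lemma dom_struct (hinj : Set.InjOn f (Set.Iio m))
    (hA : A = {p | ∃ k, k + 1 < m ∧ p = (f k, f (k + 1))}) {u : α} {l : ℕ}
    (hl : l < m) (h : Dominates A u (f l)) : ∃ j, j ≤ l ∧ u = f j := by
  rcases (Relation.reflTransGen_iff_eq_or_transGen).mp h with h | h
  · exact ⟨l, le_refl l, h.symm⟩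
  · obtain ⟨j, l', hjl, hl', hu, hv⟩ := tg_struct hinj hA h
    have : l' = l := hinj (Set.mem_Iio.mpr hl') (Set.mem_Iio.mpr hl) hv.symm
    exact ⟨j, by omega, hu⟩

lemma pred_eq (hinj : Set.InjOn f (Set.Iio m))
    (hA : A = {p | ∃ k, k + 1 < m ∧ p = (f k, f (k + 1))}) {k : ℕ}
    (hk : k < m) : Pred A (f k) = f '' Set.Iio k := by
  ext u
  constructor
  · intro h
    obtain ⟨j, l, hjl, hl, hu, hv⟩ := tg_struct hinj hA h
    have : l = k := hinj (Set.mem_Iio.mpr hl) (Set.mem_Iio.mpr hk) hv.symm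
    exact ⟨j, Set.mem_Iio.mpr (by omega), hu.symm⟩
  · rintro ⟨j, hj, rfl⟩
    exact tg_chain hA (Set.mem_Iio.mp hj) hk

lemma pred_ncard (hinj : Set.InjOn f (Set.Iio m))
    (hA : A = {p | ∃ k, k + 1 < m ∧ p = (f k, f (k + 1))}) {k : ℕ}
    (hk : k < m) : (Pred A (f k)).ncard = k := by
  rw [pred_eq hinj hA hk,
    Set.ncard_image_of_injOn (hinj.mono (Set.Iio_subset_Iio hk.le)),
    ← Finset.coe_Iio, Set.ncard_coe_finset, Nat.card_Iio]


lemma dir1_bound {α : Type*} [Fintype α] {Vi : Set α} {A : Set (α × α)}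
    (hp : IsDirPath Vi A) (σo : Option α) :
    dissat Vi A {v | σo = some v} ≤ σo.elim Vi.ncard (pathW Vi A) := by
  obtain ⟨m, f, hinj, hV, hA⟩ := hp
  cases σo with
  | none =>
    exact Set.ncard_le_ncard (fun v hv => hv.1) (Set.toFinite _)
  | some v =>
    simp only [Option.elim]
    by_cases hvV : v ∈ Vi
    · rw [pathW_pos hvV]
      apply Set.ncard_le_ncard _ (Set.toFinite _)
      intro w hw
      obtain ⟨hwV, hnd⟩ := hw
      have hwV' := hwV
      rw [hV] at hwV'
      obtain ⟨l, hl, rfl⟩ := hwV'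
      have hvV' := hvV
      rw [hV] at hvV'
      obtain ⟨k, hk, rfl⟩ := hvV'
      by_cases hkl : k ≤ l
      · exact absurd ⟨f k, rfl, hvV, dom_of_le hA hkl (Set.mem_Iio.mp hl)⟩ hnd
      · exact tg_chain hA (show l < k by omega) (Set.mem_Iio.mp hk)
    · rw [pathW_neg hvV]
      exact Set.ncard_le_ncard (fun w hw => hw.1) (Set.toFinite _)


lemma dir2_some {α : Type*} [Fintype α] {Vi : Set α} {A : Set (α × α)}
    {m : ℕ} {f : ℕ → α} (hinj : Set.InjOn f (Set.Iio m)) (hV : Vi = f '' Set.Iio m)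
    (hA : A = {p | ∃ k, k + 1 < m ∧ p = (f k, f (k + 1))}) (P : Set α)
    (hN : {k | k < m ∧ f k ∈ P}.Nonempty) :
    pathW Vi A (f (sInf {k | k < m ∧ f k ∈ P})) ≤ dissat Vi A P := by
  set S : Set ℕ := {k | k < m ∧ f k ∈ P} with hS
  obtain ⟨hklt, hkP⟩ := Nat.sInf_mem hN
  have hfV : f (sInf S) ∈ Vi := by
    rw [hV]; exact ⟨_, Set.mem_Iio.mpr hklt, rfl⟩
  rw [pathW_pos hfV]
  apply Set.ncard_le_ncard _ (Set.toFinite _)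
  intro u hu
  obtain ⟨j, l, hjl, hl, rfl, hv⟩ := tg_struct hinj hA hu
  have hlk : l = sInf S :=
    hinj (Set.mem_Iio.mpr hl) (Set.mem_Iio.mpr hklt) hv.symm
  subst hlk
  refine ⟨by rw [hV]; exact ⟨j, Set.mem_Iio.mpr (show j < m by omega), rfl⟩, ?_⟩
  rintro ⟨p, hpP, hpV, hpd⟩
  rw [hV] at hpV
  obtain ⟨j', hj', rfl⟩ := hpV
  obtain ⟨j'', hj'', he⟩ := dom_struct hinj hA (show j < m by omega) hpd
  have hj'm := Set.mem_Iio.mp hj'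
  have h1 : j' = j'' := hinj hj' (Set.mem_Iio.mpr (show j'' < m by omega)) he
  have h2 : sInf S ≤ j' := Nat.sInf_le ⟨hj'm, hpP⟩
  omega

lemma dir2_none {α : Type*} [Fintype α] {Vi : Set α} {A : Set (α × α)}
    {m : ℕ} {f : ℕ → α} (hV : Vi = f '' Set.Iio m) (P : Set α)
    (hN : ¬ {k | k < m ∧ f k ∈ P}.Nonempty) :
    Vi.ncard ≤ dissat Vi A P := by
  have heq : {v | v ∈ Vi ∧ ¬∃ u, u ∈ P ∧ u ∈ Vi ∧ Dominates A u v} = Vi := by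
    ext v
    simp only [Set.mem_setOf_eq]
    constructor
    · exact fun h => h.1
    · intro hv
      refine ⟨hv, ?_⟩
      rintro ⟨u, huP, huV, -⟩
      rw [hV] at huV
      obtain ⟨k, hk, rfl⟩ := huV
      exact hN ⟨k, Set.mem_Iio.mp hk, huP⟩
  rw [dissat, heq]

end PathLemmas

theorem stmt9 {α ι : Type*} [Fintype α] [Fintype ι]
    (Vi : ι → Set α) (A : ι → Set (α × α))
    (hpath : ∀ i, IsDirPath (Vi i) (A i)) :
    sInf {d : ℕ | ∃ π : ι → Set α, IsAllocation π ∧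
        d = Finset.univ.sup (fun i => dissat (Vi i) (A i) (π i))} =
    sInf {c : ℕ | ∃ σ : ι → Option α,
        (∀ i j : ι, ∀ v : α, σ i = some v → σ j = some v → i = j) ∧
        c = Finset.univ.sup (fun i => (σ i).elim ((Vi i).ncard)
              (fun v => pathW (Vi i) (A i) v))} := by
  classical
  choose m f hinj hV hA using hpath
  apply le_antisymm
  · have hne : {c : ℕ | ∃ σ : ι → Option α,
        (∀ i j : ι, ∀ v : α, σ i = some v → σ j = some v → i = j) ∧
        c = Finset.univ.sup (fun i => (σ i).elim ((Vi i).ncard)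
              (fun v => pathW (Vi i) (A i) v))}.Nonempty :=
      ⟨_, fun _ => none, fun i j v h => (by simp at h), rfl⟩
    obtain ⟨σ, hσinj, hc⟩ := Nat.sInf_mem hne
    refine le_trans (Nat.sInf_le ⟨fun i => {v | σ i = some v}, ?_, rfl⟩) ?_
    · intro i j hij
      rw [Set.disjoint_left]
      intro v hvi hvj
      exact hij (hσinj i j v hvi hvj)
    · rw [hc]
      exact Finset.sup_mono_fun fun i _ =>
        dir1_bound ⟨m i, f i, hinj i, hV i, hA i⟩ (σ i)
  · have hne : {d : ℕ | ∃ π : ι → Set α, IsAllocation π ∧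
        d = Finset.univ.sup (fun i => dissat (Vi i) (A i) (π i))}.Nonempty :=
      ⟨_, fun _ => (∅ : Set α), fun i j _ => Set.disjoint_empty ∅, rfl⟩
    obtain ⟨π, hπ, hd⟩ := Nat.sInf_mem hne
    refine le_trans (Nat.sInf_le
      ⟨fun i => if h : {k | k < m i ∧ f i k ∈ π i}.Nonempty
          then some (f i (sInf {k | k < m i ∧ f i k ∈ π i})) else none, ?_, rfl⟩) ?_
    · intro i j v hi hj
      simp only at hi hj
      by_contra hij
      by_cases hiN : {k | k < m i ∧ f i k ∈ π i}.Nonempty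
      · by_cases hjN : {k | k < m j ∧ f j k ∈ π j}.Nonempty
        · simp only [dif_pos hiN] at hi
          simp only [dif_pos hjN] at hj
          have h1 : v ∈ π i := (Option.some.inj hi) ▸ (Nat.sInf_mem hiN).2
          have h2 : v ∈ π j := (Option.some.inj hj) ▸ (Nat.sInf_mem hjN).2
          exact Set.disjoint_left.mp (hπ hij) h1 h2
        · simp only [dif_neg hjN] at hj
          exact absurd hj (by simp)
      · simp only [dif_neg hiN] at hi
        exact absurd hi (by simp)
    · rw [hd]
      apply Finset.sup_mono_fun
      intro i _
      simp only
      by_cases hiN : {k | k < m i ∧ f i k ∈ π i}.Nonempty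
      · simp only [dif_pos hiN, Option.elim]
        exact dir2_some (hinj i) (hV i) (hA i) (π i) hiN
      · simp only [dif_neg hiN, Option.elim]
        exact dir2_none (hV i) (π i) hiN
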